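/- In the non-monotone NMRandGreeDi algorithm, for each machine i, E[f(S_i¹) + f(S_i²)] ≥ α·f⁻(𝟙_OPT − p), where S_i¹ = Greedy(V_i), S_i² = Greedy(V_i ∖ S_i¹), Greedy satisfies the property f(Greedy(X)) ≥ α·f(Greedy(X) ∪ O) for every feasible O ∈ I, and p_e = Pr_{A~V(1/m)}[e ∈ Greedy(A∪{e}) or e ∈ Greedy((A∪{e}) ∖ Greedy(A∪{e}))] for e ∈ OPT, p_e = 0 otherwise. -/

import Mathlib

open MeasureTheory Finset

/-- A set function is submodular. -/
def Submodular {V : Type*} [DecidableEq V] (f : Finset V → ℝ) : Prop :=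
  ∀ A B : Finset V, f (A ∪ B) + f (A ∩ B) ≤ f A + f B

/-- The Lovász extension: expectation over a uniform threshold θ ∈ (0,1). -/
noncomputable def lovasz {V : Type*} [Fintype V] [DecidableEq V]
    (f : Finset V → ℝ) (x : V → ℝ) : ℝ :=
  ∫ θ in Set.Ioo (0:ℝ) 1, f (Finset.univ.filter (fun i => θ ≤ x i))

/-- Characteristic vector of a finite set. -/
def charVec {V : Type*} [DecidableEq V] (S : Finset V) : V → ℝ :=
  fun i => if i ∈ S then 1 else 0
/-- One pass of the standard greedy algorithm with fuel `n`: at each step add the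
feasible element of `X` with maximum nonnegative marginal gain, breaking ties by
the fixed linear order on `V` (choosing the least maximizer). -/
noncomputable def greedyAux {V : Type*} [Fintype V] [DecidableEq V] [LinearOrder V]
    (f : Finset V → ℝ) (I : Finset V → Prop) [DecidablePred I]
    (X : Finset V) : ℕ → Finset V → Finset V
  | 0, S => S
  | (n+1), S =>
    let C := (X \ S).filter (fun e => I (insert e S) ∧ 0 ≤ f (insert e S) - f S)
    let M := C.filter (fun e => ∀ e' ∈ C, f (insert e' S) - f S ≤ f (insert e S) - f S)
    if h : M.Nonempty then greedyAux f I X n (insert (M.min' h) S) else S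

/-- The standard greedy algorithm on ground set `X`. -/
noncomputable def greedy {V : Type*} [Fintype V] [DecidableEq V] [LinearOrder V]
    (f : Finset V → ℝ) (I : Finset V → Prop) [DecidablePred I]
    (X : Finset V) : Finset V :=
  greedyAux f I X (Fintype.card V) ∅
/-- Expectation of `g` over a uniformly random assignment of elements to `m` machines. -/
noncomputable def expAssign {V : Type*} [Fintype V] [DecidableEq V] (m : ℕ) (g : (V → Fin m) → ℝ) : ℝ :=
  (∑ σ : V → Fin m, g σ) / (Fintype.card (V → Fin m) : ℝ)

/-- The set of elements assigned to machine `i` by the assignment `σ`. -/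
def machineSet {V : Type*} [Fintype V] [DecidableEq V] {m : ℕ}
    (σ : V → Fin m) (i : Fin m) : Finset V :=
  Finset.univ.filter (fun e => σ e = i)

section GreedyLemmas
set_option linter.unusedSectionVars false

variable {V : Type*} [Fintype V] [DecidableEq V] [LinearOrder V]
  (f : Finset V → ℝ) (I : Finset V → Prop) [DecidablePred I]

noncomputable def gcand (X S : Finset V) : Finset V :=
  (X \ S).filter (fun e => I (insert e S) ∧ 0 ≤ f (insert e S) - f S)

noncomputable def gmax (X S : Finset V) : Finset V :=
  (gcand f I X S).filter
    (fun e => ∀ e' ∈ gcand f I X S, f (insert e' S) - f S ≤ f (insert e S) - f S)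

lemma gmax_subset {X S : Finset V} : gmax f I X S ⊆ X := fun a ha =>
  (Finset.mem_sdiff.1 (Finset.mem_filter.1 (Finset.mem_filter.1 ha).1).1).1

lemma greedyAux_succ (X S : Finset V) (n : ℕ) :
    greedyAux f I X (n+1) S =
      if h : (gmax f I X S).Nonempty then
        greedyAux f I X n (insert ((gmax f I X S).min' h) S) else S := rfl

lemma subset_greedyAux (X : Finset V) : ∀ (n : ℕ) (S : Finset V), S ⊆ greedyAux f I X n S := by
  intro n
  induction n with
  | zero => intro S; exact subset_rfl
  | succ n ih =>
    intro S
    rw [greedyAux_succ]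
    split
    · exact (subset_insert _ _).trans (ih _)
    · exact subset_rfl

lemma greedyAux_subset (X : Finset V) : ∀ (n : ℕ) (S : Finset V),
    greedyAux f I X n S ⊆ X ∪ S := by
  intro n
  induction n with
  | zero => intro S; exact subset_union_right
  | succ n ih =>
    intro S
    rw [greedyAux_succ]
    split
    · next h =>
      refine (ih _).trans ?_
      have hw : (gmax f I X S).min' h ∈ X := gmax_subset f I (Finset.min'_mem _ h)
      intro a ha
      rcases mem_union.1 ha with h1 | h1
      · exact mem_union_left _ h1
      · rcases mem_insert.1 h1 with rfl | h2
        · exact mem_union_left _ hw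
        · exact mem_union_right _ h2
    · exact subset_union_right

lemma gcand_mono {X Y S : Finset V} (hXY : X ⊆ Y) : gcand f I X S ⊆ gcand f I Y S := by
  apply Finset.filter_subset_filter
  exact Finset.sdiff_subset_sdiff hXY subset_rfl

lemma gmax_nonempty_iff {X S : Finset V} :
    (gmax f I X S).Nonempty ↔ (gcand f I X S).Nonempty := by
  constructor
  · rintro ⟨a, ha⟩
    exact ⟨a, (Finset.mem_filter.1 ha).1⟩
  · intro h
    obtain ⟨b, hb, hmax⟩ := Finset.exists_max_image (gcand f I X S)
      (fun e => f (insert e S) - f S) h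
    exact ⟨b, Finset.mem_filter.2 ⟨hb, hmax⟩⟩

lemma gmax_sandwich {X Y S : Finset V} (hXY : X ⊆ Y) (hY : (gmax f I Y S).Nonempty)
    (hw : (gmax f I Y S).min' hY ∈ X) :
    ∃ hX : (gmax f I X S).Nonempty, (gmax f I X S).min' hX = (gmax f I Y S).min' hY := by
  set w := (gmax f I Y S).min' hY with hwdef
  have hwY : w ∈ gmax f I Y S := Finset.min'_mem _ hY
  obtain ⟨hwc, hwmax⟩ := Finset.mem_filter.1 hwY
  have hwcX : w ∈ gcand f I X S := by
    simp only [gcand, mem_filter, mem_sdiff] at hwc ⊢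
    exact ⟨⟨hw, hwc.1.2⟩, hwc.2⟩
  have hwX : w ∈ gmax f I X S :=
    Finset.mem_filter.2 ⟨hwcX, fun e' he' => hwmax e' (gcand_mono f I hXY he')⟩
  have hX : (gmax f I X S).Nonempty := ⟨w, hwX⟩
  refine ⟨hX, ?_⟩
  set u := (gmax f I X S).min' hX with hudef
  have huX : u ∈ gmax f I X S := Finset.min'_mem _ hX
  obtain ⟨huc, humax⟩ := Finset.mem_filter.1 huX
  have hucY : u ∈ gcand f I Y S := gcand_mono f I hXY huc
  have h1 : f (insert w S) - f S ≤ f (insert u S) - f S := humax w hwcX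
  have h2 : f (insert u S) - f S ≤ f (insert w S) - f S := hwmax u hucY
  have huY : u ∈ gmax f I Y S := by
    refine Finset.mem_filter.2 ⟨hucY, fun e' he' => ?_⟩
    exact le_trans (hwmax e' he') h1
  have hle1 : u ≤ w := Finset.min'_le _ w hwX
  have hle2 : w ≤ u := Finset.min'_le _ u huY
  exact le_antisymm hle1 hle2

lemma greedyAux_union (X T : Finset V) : ∀ (n : ℕ) (S : Finset V),
    (∀ t ∈ T, t ∉ X → t ∉ greedyAux f I (insert t X) n S) →
    greedyAux f I (X ∪ T) n S = greedyAux f I X n S := by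
  intro n
  induction n with
  | zero => intro S _; rfl
  | succ n ih =>
    intro S hT
    by_cases h : (gmax f I (X ∪ T) S).Nonempty
    · set w := (gmax f I (X ∪ T) S).min' h with hwdef
      have hwmem : w ∈ X ∪ T := gmax_subset f I (Finset.min'_mem _ h)
      by_cases hwX : w ∈ X
      · obtain ⟨hX, hXeq⟩ := gmax_sandwich f I subset_union_left h hwX
        rw [greedyAux_succ, greedyAux_succ, dif_pos h, dif_pos hX, hXeq]
        apply ih
        intro t ht htX
        have htsub : insert t X ⊆ X ∪ T :=
          Finset.insert_subset (mem_union_right _ ht) subset_union_left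
        have hwmem' : w ∈ insert t X := mem_insert_of_mem hwX
        obtain ⟨ht1, ht2⟩ := gmax_sandwich f I htsub h hwmem'
        have := hT t ht htX
        rw [greedyAux_succ, dif_pos ht1, ht2] at this
        exact this
      · have hwT : w ∈ T := (mem_union.1 hwmem).resolve_left hwX
        exfalso
        have htsub : insert w X ⊆ X ∪ T :=
          Finset.insert_subset (mem_union_right _ hwT) subset_union_left
        obtain ⟨ht1, ht2⟩ := gmax_sandwich f I htsub h (mem_insert_self w X)
        have := hT w hwT hwX
        rw [greedyAux_succ, dif_pos ht1, ht2] at this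
        exact this (subset_greedyAux f I _ n _ (mem_insert_self w S))
    · have hXempty : ¬ (gmax f I X S).Nonempty := by
        intro hX
        apply h
        rw [gmax_nonempty_iff] at hX ⊢
        obtain ⟨a, ha⟩ := hX
        exact ⟨a, gcand_mono f I subset_union_left ha⟩
      rw [greedyAux_succ, greedyAux_succ, dif_neg h, dif_neg hXempty]

lemma greedy_union {X T : Finset V}
    (hT : ∀ t ∈ T, t ∉ X → t ∉ greedy f I (insert t X)) :
    greedy f I (X ∪ T) = greedy f I X :=
  greedyAux_union f I X T _ ∅ hT

lemma greedy_subset (X : Finset V) : greedy f I X ⊆ X := by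
  have := greedyAux_subset f I X (Fintype.card V) ∅
  simpa [greedy] using this

lemma greedy_insert {X : Finset V} {t : V} (ht : t ∉ greedy f I (insert t X)) :
    greedy f I (insert t X) = greedy f I X := by
  by_cases htX : t ∈ X
  · rw [Finset.insert_eq_self.2 htX]
  · have : X ∪ {t} = insert t X := by
      rw [Finset.union_comm]; rw [Finset.insert_eq]
    rw [← this]
    apply greedy_union
    intro t' ht' _
    rw [Finset.mem_singleton] at ht'
    subst ht'
    exact ht

end GreedyLemmas

section Sums

variable {V : Type*} [DecidableEq V]

/-- Edmonds-type sum along a list for a set `R`. -/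
def edSum (f : Finset V → ℝ) (R : Finset V) : List V → Finset V → ℝ
  | [], _ => 0
  | e :: l, P => (if e ∈ R then f (insert e P) - f P else 0) + edSum f R l (insert e P)

/-- Weighted sum of marginal gains. -/
def wSum (f : Finset V → ℝ) (x : V → ℝ) : List V → Finset V → ℝ
  | [], _ => 0
  | e :: l, P => x e * (f (insert e P) - f P) + wSum f x l (insert e P)

/-- Thresholded sum of marginal gains. -/
noncomputable def tSum (f : Finset V → ℝ) (x : V → ℝ) (θ : ℝ) : List V → Finset V → ℝ
  | [], _ => 0
  | e :: l, P => (if θ ≤ x e then f (insert e P) - f P else 0) + tSum f x θ l (insert e P)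

lemma edSum_congr (f : Finset V → ℝ) {R R' : Finset V} :
    ∀ (l : List V) (P : Finset V), (∀ a ∈ l, (a ∈ R ↔ a ∈ R')) →
    edSum f R l P = edSum f R' l P := by
  intro l
  induction l with
  | nil => intro P _; rfl
  | cons e l ih =>
    intro P h
    simp only [edSum]
    rw [ih (insert e P) (fun a ha => h a (List.mem_cons_of_mem e ha))]
    congr 1
    by_cases he : e ∈ R
    · rw [if_pos he, if_pos ((h e (List.mem_cons_self : e ∈ e :: l)).1 he)]
    · rw [if_neg he, if_neg (fun h' => he ((h e (List.mem_cons_self : e ∈ e :: l)).2 h'))]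

/-- Edmonds' lemma: the greedy-order lower bound. -/
lemma edSum_le {f : Finset V → ℝ} (hsub : Submodular f) :
    ∀ (l : List V) (P R : Finset V), l.Nodup → (∀ a ∈ l, a ∉ P) → R ⊆ l.toFinset →
    f P + edSum f R l P ≤ f (P ∪ R) := by
  intro l
  induction l with
  | nil =>
    intro P R _ _ hR
    have : R = ∅ := Finset.subset_empty.1 (by simpa using hR)
    simp [this, edSum]
  | cons e l ih =>
    intro P R hnd hP hR
    have hndl : l.Nodup := (List.nodup_cons.1 hnd).2
    have hel : e ∉ l := (List.nodup_cons.1 hnd).1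
    have heP : e ∉ P := hP e (List.mem_cons_self : e ∈ e :: l)
    have hPl : ∀ a ∈ l, a ∉ insert e P := by
      intro a ha
      simp only [Finset.mem_insert, not_or]
      exact ⟨fun h => hel (h ▸ ha), hP a (List.mem_cons_of_mem e ha)⟩
    by_cases he : e ∈ R
    · have hR' : R.erase e ⊆ l.toFinset := by
        intro a ha
        obtain ⟨hne, haR⟩ := Finset.mem_erase.1 ha
        have := hR haR
        simp only [List.toFinset_cons, Finset.mem_insert] at this
        exact this.resolve_left hne
      have hIH := ih (insert e P) (R.erase e) hndl hPl hR'
      have hcongr : edSum f (R.erase e) l (insert e P) = edSum f R l (insert e P) := by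
        apply edSum_congr
        intro a ha
        simp only [Finset.mem_erase]
        constructor
        · exact fun h => h.2
        · exact fun h => ⟨fun hae => hel (hae ▸ ha), h⟩
      have hset : insert e P ∪ R.erase e = P ∪ R := by
        ext a
        simp only [Finset.mem_union, Finset.mem_insert, Finset.mem_erase]
        by_cases hae : a = e
        · subst hae; simp [he]
        · simp [hae]
      rw [hcongr, hset] at hIH
      simp only [edSum, if_pos he]
      linarith
    · have hR' : R ⊆ l.toFinset := by
        intro a ha
        have := hR ha
        simp only [List.toFinset_cons, Finset.mem_insert] at this
        exact this.resolve_left (fun hae => he (hae ▸ ha))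
      have hIH := ih (insert e P) R hndl hPl hR'
      have hsm := hsub (insert e P) (P ∪ R)
      have h1 : insert e P ∪ (P ∪ R) = insert e P ∪ R := by
        ext a; simp only [Finset.mem_union, Finset.mem_insert]; tauto
      have h2 : insert e P ∩ (P ∪ R) = P := by
        ext a
        simp only [Finset.mem_inter, Finset.mem_union, Finset.mem_insert]
        constructor
        · rintro ⟨h3 | h3, h4⟩
          · subst h3; rcases h4 with h4 | h4 <;> [exact absurd h4 heP; exact absurd h4 he]
          · exact h3
        · intro h3; exact ⟨Or.inr h3, Or.inl h3⟩
      rw [h1, h2] at hsm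
      simp only [edSum, if_neg he]
      linarith

lemma tSum_zero (f : Finset V → ℝ) (x : V → ℝ) (θ : ℝ) :
    ∀ (l : List V) (P : Finset V), (∀ a ∈ l, ¬ θ ≤ x a) → tSum f x θ l P = 0 := by
  intro l
  induction l with
  | nil => intro P _; rfl
  | cons e l ih =>
    intro P h
    simp only [tSum, if_neg (h e (List.mem_cons_self : e ∈ e :: l))]
    rw [ih (insert e P) (fun a ha => h a (List.mem_cons_of_mem e ha))]
    ring

lemma filter_eq_tSum (f : Finset V → ℝ) (x : V → ℝ) (θ : ℝ) :
    ∀ (l : List V) (P : Finset V), l.Pairwise (fun a b => x b ≤ x a) → l.Nodup →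
      (∀ a ∈ l, a ∉ P) →
    f (P ∪ l.toFinset.filter (fun e => θ ≤ x e)) = f P + tSum f x θ l P := by
  intro l
  induction l with
  | nil => intro P _ _ _; simp [tSum]
  | cons e l ih =>
    intro P hpw hnd hP
    have hpwl : l.Pairwise (fun a b => x b ≤ x a) := (List.pairwise_cons.1 hpw).2
    have hle : ∀ b ∈ l, x b ≤ x e := (List.pairwise_cons.1 hpw).1
    have hndl : l.Nodup := (List.nodup_cons.1 hnd).2
    have hel : e ∉ l := (List.nodup_cons.1 hnd).1
    have heP : e ∉ P := hP e (List.mem_cons_self : e ∈ e :: l)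
    have hPl : ∀ a ∈ l, a ∉ insert e P := by
      intro a ha
      simp only [Finset.mem_insert, not_or]
      exact ⟨fun h => hel (h ▸ ha), hP a (List.mem_cons_of_mem e ha)⟩
    by_cases hθ : θ ≤ x e
    · have hfilter : (e :: l).toFinset.filter (fun a => θ ≤ x a)
          = insert e (l.toFinset.filter (fun a => θ ≤ x a)) := by
        simp only [List.toFinset_cons]
        rw [Finset.filter_insert, if_pos hθ]
      have hset : P ∪ insert e (l.toFinset.filter (fun a => θ ≤ x a))
          = insert e P ∪ l.toFinset.filter (fun a => θ ≤ x a) := by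
        ext a; simp only [Finset.mem_union, Finset.mem_insert]; tauto
      rw [hfilter, hset, ih (insert e P) hpwl hndl hPl]
      simp only [tSum, if_pos hθ]
      ring
    · have hfilter : (e :: l).toFinset.filter (fun a => θ ≤ x a) = ∅ := by
        rw [Finset.filter_eq_empty_iff]
        intro a ha
        simp only [List.toFinset_cons, Finset.mem_insert, List.mem_toFinset] at ha
        rcases ha with rfl | ha
        · exact hθ
        · exact fun h => hθ (le_trans h (hle a ha))
      rw [hfilter]
      simp only [tSum, if_neg hθ]
      rw [tSum_zero f x θ l (insert e P)
        (fun a ha h => hθ (le_trans h (hle a ha)))]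
      simp

lemma ite_le_indicator (c d : ℝ) :
    (fun θ : ℝ => if θ ≤ c then d else 0) = (Set.Iic c).indicator (fun _ => d) := by
  funext θ; simp [Set.indicator_apply]

lemma tSum_integrable (f : Finset V → ℝ) (x : V → ℝ) :
    ∀ (l : List V) (P : Finset V),
    Integrable (fun θ => tSum f x θ l P) (volume.restrict (Set.Ioo (0:ℝ) 1)) := by
  haveI : Fact (volume (Set.Ioo (0:ℝ) 1) < ⊤) := ⟨by simp [Real.volume_Ioo]⟩
  intro l
  induction l with
  | nil => simpa [tSum] using integrable_const (0:ℝ)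
  | cons e l ih =>
    intro P
    simp only [tSum]
    apply Integrable.add
    · rw [ite_le_indicator]
      exact (integrable_const _).indicator measurableSet_Iic
    · exact ih (insert e P)

lemma integral_ite_le {c : ℝ} (hc : c ∈ Set.Icc (0:ℝ) 1) (d : ℝ) :
    ∫ θ in Set.Ioo (0:ℝ) 1, (if θ ≤ c then d else 0) = c * d := by
  rw [ite_le_indicator, MeasureTheory.setIntegral_indicator measurableSet_Iic,
    MeasureTheory.setIntegral_const]
  have hvol : volume (Set.Ioo (0:ℝ) 1 ∩ Set.Iic c) = ENNReal.ofReal c := by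
    rcases lt_or_eq_of_le hc.2 with h1 | h1
    · have : Set.Ioo (0:ℝ) 1 ∩ Set.Iic c = Set.Ioc 0 c := by
        ext θ
        simp only [Set.mem_inter_iff, Set.mem_Ioo, Set.mem_Iic, Set.mem_Ioc]
        constructor
        · rintro ⟨⟨h2, _⟩, h3⟩; exact ⟨h2, h3⟩
        · rintro ⟨h2, h3⟩; exact ⟨⟨h2, lt_of_le_of_lt h3 h1⟩, h3⟩
      rw [this, Real.volume_Ioc, sub_zero]
    · have : Set.Ioo (0:ℝ) 1 ∩ Set.Iic c = Set.Ioo 0 1 := by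
        rw [Set.inter_eq_left]
        intro θ hθ
        simp only [Set.mem_Iic]
        exact le_of_lt (h1 ▸ hθ.2)
      rw [this, Real.volume_Ioo, ← h1]
      norm_num
  rw [measureReal_def, hvol, ENNReal.toReal_ofReal hc.1]
  simp [smul_eq_mul]

lemma tSum_integral (f : Finset V → ℝ) (x : V → ℝ) (hx : ∀ e, x e ∈ Set.Icc (0:ℝ) 1) :
    ∀ (l : List V) (P : Finset V),
    (∫ θ in Set.Ioo (0:ℝ) 1, tSum f x θ l P) = wSum f x l P := by
  intro l
  induction l with
  | nil => simp [tSum, wSum]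
  | cons e l ih =>
    intro P
    simp only [tSum, wSum]
    rw [MeasureTheory.integral_add ?hint1 (tSum_integrable f x l (insert e P))]
    · rw [integral_ite_le (hx e), ih (insert e P)]
    case hint1 =>
      rw [ite_le_indicator]
      exact (integrable_const _).indicator measurableSet_Iic

end Sums

lemma lovasz_eq_wSum {V : Type*} [Fintype V] [DecidableEq V]
    (f : Finset V → ℝ) (x : V → ℝ) (hx : ∀ e, x e ∈ Set.Icc (0:ℝ) 1)
    (l : List V) (hnd : l.Nodup) (hmem : ∀ e, e ∈ l)
    (hpw : l.Pairwise (fun a b => x b ≤ x a)) :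
    lovasz f x = f ∅ + wSum f x l ∅ := by
  haveI : Fact (volume (Set.Ioo (0:ℝ) 1) < ⊤) := ⟨by simp [Real.volume_Ioo]⟩
  have htF : l.toFinset = Finset.univ := by
    ext a; simp [List.mem_toFinset, hmem a]
  have hpt : ∀ θ : ℝ, f (Finset.univ.filter (fun i => θ ≤ x i)) = f ∅ + tSum f x θ l ∅ := by
    intro θ
    have := filter_eq_tSum f x θ l ∅ hpw hnd (by simp)
    rw [htF] at this
    simpa using this
  unfold lovasz
  rw [MeasureTheory.setIntegral_congr_fun measurableSet_Ioo
    (fun θ _ => hpt θ)]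
  rw [MeasureTheory.integral_add (integrable_const _) (tSum_integrable f x l ∅)]
  rw [tSum_integral f x hx l ∅]
  congr 1
  rw [MeasureTheory.setIntegral_const]
  simp [Real.volume_Ioo]

section ExpA
variable {V : Type*} [Fintype V] [DecidableEq V] {m : ℕ}

lemma expAssign_add (g h : (V → Fin m) → ℝ) :
    expAssign m (fun σ => g σ + h σ) = expAssign m g + expAssign m h := by
  unfold expAssign
  rw [Finset.sum_add_distrib, add_div]

lemma expAssign_mul (c : ℝ) (g : (V → Fin m) → ℝ) :
    expAssign m (fun σ => c * g σ) = c * expAssign m g := by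
  unfold expAssign
  rw [← Finset.mul_sum, mul_div_assoc]

lemma expAssign_const (hm : 0 < m) (c : ℝ) :
    expAssign m (fun _ : V → Fin m => c) = c := by
  haveI : Nonempty (Fin m) := ⟨⟨0, hm⟩⟩
  have hN : (0:ℝ) < (Fintype.card (V → Fin m) : ℝ) := by
    exact_mod_cast Fintype.card_pos
  unfold expAssign
  rw [Finset.sum_const, Finset.card_univ, nsmul_eq_mul]
  field_simp

lemma expAssign_sub (g h : (V → Fin m) → ℝ) :
    expAssign m (fun σ => g σ - h σ) = expAssign m g - expAssign m h := by
  unfold expAssign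
  rw [Finset.sum_sub_distrib, sub_div]

lemma expAssign_mono {g h : (V → Fin m) → ℝ} (hgh : ∀ σ, g σ ≤ h σ) :
    expAssign m g ≤ expAssign m h := by
  unfold expAssign
  exact div_le_div_of_nonneg_right (Finset.sum_le_sum (fun σ _ => hgh σ))
    (Nat.cast_nonneg _)

lemma expAssign_mem_Icc (hm : 0 < m) {g : (V → Fin m) → ℝ}
    (hg : ∀ σ, g σ ∈ Set.Icc (0:ℝ) 1) : expAssign m g ∈ Set.Icc (0:ℝ) 1 := by
  constructor
  · have := expAssign_mono (g := fun _ : V → Fin m => (0:ℝ)) (h := g) (fun σ => (hg σ).1)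
    rwa [expAssign_const hm] at this
  · have := expAssign_mono (g := g) (h := fun _ : V → Fin m => (1:ℝ)) (fun σ => (hg σ).2)
    rwa [expAssign_const hm] at this

end ExpA

lemma exists_sorted_list {V : Type*} [Fintype V] [DecidableEq V] (x : V → ℝ) :
    ∃ l : List V, l.Nodup ∧ (∀ e, e ∈ l) ∧ l.Pairwise (fun a b => x b ≤ x a) := by
  suffices h : ∀ s : Finset V, ∃ l : List V, l.Nodup ∧ (∀ e, e ∈ l ↔ e ∈ s) ∧
      l.Pairwise (fun a b => x b ≤ x a) by
    obtain ⟨l, h1, h2, h3⟩ := h Finset.univ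
    exact ⟨l, h1, fun e => (h2 e).2 (Finset.mem_univ e), h3⟩
  intro s
  induction s using Finset.strongInductionOn with
  | _ s ih =>
    by_cases hs : s.Nonempty
    · obtain ⟨b, hb, hmax⟩ := Finset.exists_max_image s x hs
      obtain ⟨l, h1, h2, h3⟩ := ih (s.erase b) (Finset.erase_ssubset hb)
      refine ⟨b :: l, ?_, ?_, ?_⟩
      · rw [List.nodup_cons]
        exact ⟨fun hbl => (Finset.mem_erase.1 ((h2 b).1 hbl)).1 rfl, h1⟩
      · intro e
        rw [List.mem_cons, h2 e, Finset.mem_erase]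
        constructor
        · rintro (rfl | ⟨_, h⟩) <;> [exact hb; assumption]
        · intro he
          by_cases heb : e = b
          · exact Or.inl heb
          · exact Or.inr ⟨heb, he⟩
      · rw [List.pairwise_cons]
        exact ⟨fun a ha => hmax a (Finset.mem_of_mem_erase ((h2 a).1 ha)), h3⟩
    · refine ⟨[], List.nodup_nil, ?_, List.Pairwise.nil⟩
      intro e
      simp [Finset.not_nonempty_iff_eq_empty.1 hs]


lemma expAssign_edSum {V : Type*} [Fintype V] [DecidableEq V] {m : ℕ}
    (f : Finset V → ℝ) (R : (V → Fin m) → Finset V) (x : V → ℝ)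
    (hq : ∀ e, expAssign m (fun σ => if e ∈ R σ then (1:ℝ) else 0) = x e) :
    ∀ (l : List V) (P : Finset V),
    expAssign m (fun σ => edSum f (R σ) l P) = wSum f x l P := by
  intro l
  induction l with
  | nil => intro P; simp [edSum, wSum, expAssign]
  | cons e l ih =>
    intro P
    simp only [edSum, wSum]
    rw [expAssign_add]
    rw [show (fun σ => if e ∈ R σ then f (insert e P) - f P else 0)
        = fun σ => (f (insert e P) - f P) * (if e ∈ R σ then (1:ℝ) else 0) by
      funext σ; by_cases h : e ∈ R σ <;> simp [h]]
    rw [expAssign_mul, hq e, ih (insert e P), mul_comm]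

lemma key_bound {V : Type*} [Fintype V] [DecidableEq V] [LinearOrder V]
    (f : Finset V → ℝ) (I : Finset V → Prop) [DecidablePred I]
    (hsub : Submodular f) (hnn : ∀ A : Finset V, 0 ≤ f A)
    (hher : ∀ A B : Finset V, A ⊆ B → I B → I A)
    (α : ℝ) (hα : 0 < α)
    (hGP : ∀ X O : Finset V, I O → α * f (greedy f I X ∪ O) ≤ f (greedy f I X))
    (OPT : Finset V) (hOPT : I OPT)
    (l : List V) (hnd : l.Nodup) (hmem : ∀ e, e ∈ l)
    (B Rs : Finset V) (hRsub : Rs ⊆ OPT)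
    (hrej : ∀ t ∈ Rs, t ∉ greedy f I (insert t B) ∧
      t ∉ greedy f I (insert t B \ greedy f I (insert t B))) :
    α * (f ∅ + edSum f Rs l ∅) ≤
      f (greedy f I B) + f (greedy f I (B \ greedy f I B)) := by
  have hS1sub : greedy f I B ⊆ B := greedy_subset f I B
  have hU1 : greedy f I (B ∪ Rs) = greedy f I B :=
    greedy_union f I (fun t ht _ => (hrej t ht).1)
  have h2 : ∀ t ∈ Rs, t ∉ B \ greedy f I B →
      t ∉ greedy f I (insert t (B \ greedy f I B)) := by
    intro t ht htn
    obtain ⟨ha1, ha2⟩ := hrej t ht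
    by_cases htB : t ∈ B
    · exfalso
      rw [Finset.insert_eq_self.2 htB] at ha1
      exact htn (Finset.mem_sdiff.2 ⟨htB, ha1⟩)
    · have hins : greedy f I (insert t B) = greedy f I B := greedy_insert f I ha1
      rw [hins] at ha2
      have htS1 : t ∉ greedy f I B := fun h => htB (hS1sub h)
      have hset : insert t B \ greedy f I B = insert t (B \ greedy f I B) := by
        ext a
        simp only [Finset.mem_sdiff, Finset.mem_insert]
        constructor
        · rintro ⟨rfl | h3, h4⟩
          · exact Or.inl rfl
          · exact Or.inr ⟨h3, h4⟩
        · rintro (rfl | ⟨h3, h4⟩)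
          · exact ⟨Or.inl rfl, htS1⟩
          · exact ⟨Or.inr h3, h4⟩
      rw [hset] at ha2
      exact ha2
  have hU2 : greedy f I ((B \ greedy f I B) ∪ Rs) = greedy f I (B \ greedy f I B) :=
    greedy_union f I h2
  have hS2sub : greedy f I (B \ greedy f I B) ⊆ B \ greedy f I B := greedy_subset f I _
  have hfeas : I Rs := hher _ OPT hRsub hOPT
  have g1 : α * f (greedy f I B ∪ Rs) ≤ f (greedy f I B) := by
    have := hGP (B ∪ Rs) Rs hfeas
    rwa [hU1] at this
  have g2 : α * f (greedy f I (B \ greedy f I B) ∪ Rs) ≤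
      f (greedy f I (B \ greedy f I B)) := by
    have := hGP ((B \ greedy f I B) ∪ Rs) Rs hfeas
    rwa [hU2] at this
  have hint : (greedy f I B ∪ Rs) ∩ (greedy f I (B \ greedy f I B) ∪ Rs) = Rs := by
    ext a
    simp only [Finset.mem_inter, Finset.mem_union]
    constructor
    · rintro ⟨h3 | h3, h4 | h4⟩
      · exact absurd h3 (Finset.mem_sdiff.1 (hS2sub h4)).2
      · exact h4
      · exact h3
      · exact h3
    · intro h3
      exact ⟨Or.inr h3, Or.inr h3⟩
  have hsm := hsub (greedy f I B ∪ Rs) (greedy f I (B \ greedy f I B) ∪ Rs)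
  rw [hint] at hsm
  have hnn2 := hnn ((greedy f I B ∪ Rs) ∪ (greedy f I (B \ greedy f I B) ∪ Rs))
  have hEd : f ∅ + edSum f Rs l ∅ ≤ f Rs := by
    have := edSum_le hsub l ∅ Rs hnd (by simp)
      (fun a _ => List.mem_toFinset.2 (hmem a))
    simpa using this
  have c1 : α * (f ∅ + edSum f Rs l ∅) ≤ α * f Rs :=
    mul_le_mul_of_nonneg_left hEd hα.le
  have c2 : α * f Rs ≤ α * (f (greedy f I B ∪ Rs) +
      f (greedy f I (B \ greedy f I B) ∪ Rs)) :=
    mul_le_mul_of_nonneg_left (by linarith) hα.le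
  rw [mul_add] at c2
  linarith

/-- Lemma 7: the two first-round greedy solutions of NMRandGreeDi on each machine. -/
theorem nmrandgreedi_single_machine {V : Type*} [Fintype V] [DecidableEq V] [LinearOrder V]
    (f : Finset V → ℝ) (I : Finset V → Prop) [DecidablePred I]
    (hsub : Submodular f) (hnn : ∀ A : Finset V, 0 ≤ f A)
    (hher : ∀ A B : Finset V, A ⊆ B → I B → I A) (hempty : I ∅)
    (α : ℝ) (hα : 0 < α)
    (hGP : ∀ X O : Finset V, I O → α * f (greedy f I X ∪ O) ≤ f (greedy f I X))
    (m : ℕ) (OPT : Finset V) (hOPT : I OPT) (i : Fin m) :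
    α * lovasz f (fun e => charVec OPT e -
        (if e ∈ OPT then
          expAssign m (fun σ =>
            if e ∈ greedy f I (insert e (machineSet σ i)) ∨
               e ∈ greedy f I
                 (insert e (machineSet σ i) \ greedy f I (insert e (machineSet σ i)))
            then 1 else 0)
         else 0))
      ≤ expAssign m (fun σ =>
          f (greedy f I (machineSet σ i)) +
            f (greedy f I (machineSet σ i \ greedy f I (machineSet σ i)))) := by
  
  have hm : 0 < m := i.pos
  set x : V → ℝ := (fun e => charVec OPT e -
        (if e ∈ OPT then
          expAssign m (fun σ =>
            if e ∈ greedy f I (insert e (machineSet σ i)) ∨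
               e ∈ greedy f I
                 (insert e (machineSet σ i) \ greedy f I (insert e (machineSet σ i)))
            then 1 else 0)
         else 0)) with hxdef
  set R : (V → Fin m) → Finset V := fun σ =>
    OPT.filter (fun e => ¬(e ∈ greedy f I (insert e (machineSet σ i)) ∨
      e ∈ greedy f I
        (insert e (machineSet σ i) \ greedy f I (insert e (machineSet σ i))))) with hRdef
  have hq : ∀ e, expAssign m (fun σ => if e ∈ R σ then (1:ℝ) else 0) = x e := by
    intro e
    by_cases he : e ∈ OPT
    · rw [show (fun σ => if e ∈ R σ then (1:ℝ) else 0)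
          = fun σ => (1:ℝ) - (if e ∈ greedy f I (insert e (machineSet σ i)) ∨
               e ∈ greedy f I
                 (insert e (machineSet σ i) \ greedy f I (insert e (machineSet σ i)))
            then 1 else 0) by
        funext σ
        simp only [hRdef, Finset.mem_filter]
        by_cases hacc : e ∈ greedy f I (insert e (machineSet σ i)) ∨
               e ∈ greedy f I
                 (insert e (machineSet σ i) \ greedy f I (insert e (machineSet σ i)))
        · simp [he, hacc]
        · simp [he, hacc]]
      rw [expAssign_sub (fun _ => (1:ℝ)), expAssign_const hm]
      simp only [hxdef, charVec, if_pos he]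
    · rw [show (fun σ => if e ∈ R σ then (1:ℝ) else 0) = fun _ => (0:ℝ) by
        funext σ
        simp [hRdef, he]]
      rw [expAssign_const hm]
      simp [hxdef, charVec, he]
  have hxIcc : ∀ e, x e ∈ Set.Icc (0:ℝ) 1 := by
    intro e
    rw [← hq e]
    exact expAssign_mem_Icc hm (fun σ => by
      by_cases h : e ∈ R σ <;> simp [h])
  obtain ⟨l, hnd, hmem, hpw⟩ := exists_sorted_list x
  have key : ∀ σ : V → Fin m, α * (f ∅ + edSum f (R σ) l ∅) ≤
      f (greedy f I (machineSet σ i)) +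
        f (greedy f I (machineSet σ i \ greedy f I (machineSet σ i))) := by
    intro σ
    apply key_bound f I hsub hnn hher α hα hGP OPT hOPT l hnd hmem
    · simp only [hRdef]
      exact Finset.filter_subset _ _
    · intro t ht
      simp only [hRdef, Finset.mem_filter] at ht
      push_neg at ht
      exact ht.2
  have hEq : expAssign m (fun σ => α * (f ∅ + edSum f (R σ) l ∅)) = α * lovasz f x := by
    rw [expAssign_mul α (fun σ => f ∅ + edSum f (R σ) l ∅)]
    rw [expAssign_add (fun _ => f ∅) (fun σ => edSum f (R σ) l ∅)]
    rw [expAssign_const hm, expAssign_edSum f R x hq l ∅]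
    rw [lovasz_eq_wSum f x hxIcc l hnd hmem hpw]
  calc α * lovasz f x = expAssign m (fun σ => α * (f ∅ + edSum f (R σ) l ∅)) := hEq.symm
    _ ≤ _ := expAssign_mono key
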